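/- arXiv:1710.06570 — 6 statements merged into one kernel-verified Lean document; each statement's English description precedes it below -/
import Mathlib

section
/- Let N be a positive integer and σ_w, σ_b > 0 with σ_w² < 1. Define g: (0,∞) → ℝ by g(r) = r² / (σ_w² r²/N + σ_b²) and f: (0,∞) → ℝ by f(r) = g(r) − N log g(r). Then f attains a strict global minimum at the unique point r* = √(N σ_b² / (1 − σ_w²)); that is, f(r) > f(r*) for all r > 0 with r ≠ r*. -/
/-- For `σ_w² < 1`, the uniform ring energy density
`f(r) = g(r) − N log g(r)` with `g(r) = r²/(σ_w² r²/N + σ_b²)` attains a strict global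
minimum on `(0, ∞)` at `r* = √(N σ_b²/(1 − σ_w²))`. -/
theorem linear_ring_uniform_strict_global_min
    (N : ℕ) (hN : 0 < N) (σw σb : ℝ) (hσw : 0 < σw) (hσb : 0 < σb)
    (hσw1 : σw ^ 2 < 1)
    (g f : ℝ → ℝ)
    (hg : ∀ r, g r = r ^ 2 / (σw ^ 2 * r ^ 2 / N + σb ^ 2))
    (hf : ∀ r, f r = g r - N * Real.log (g r)) :
    ∀ r, 0 < r → r ≠ Real.sqrt (N * σb ^ 2 / (1 - σw ^ 2)) →
      f (Real.sqrt (N * σb ^ 2 / (1 - σw ^ 2))) < f r := by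
  intro r hr hne
  have hNR : (0:ℝ) < (N:ℝ) := by exact_mod_cast hN
  have hΔ : (0:ℝ) < 1 - σw ^ 2 := by linarith
  set s := Real.sqrt (N * σb ^ 2 / (1 - σw ^ 2)) with hs
  have hsq_arg : (0:ℝ) < N * σb ^ 2 / (1 - σw ^ 2) := by positivity
  have hs0 : 0 < s := Real.sqrt_pos.mpr hsq_arg
  have hs2 : s ^ 2 = N * σb ^ 2 / (1 - σw ^ 2) := Real.sq_sqrt hsq_arg.le
  have hden : ∀ x : ℝ, (0:ℝ) < σw ^ 2 * x ^ 2 / N + σb ^ 2 := by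
    intro x; positivity
  -- g s = N
  have hgs : g s = N := by
    rw [hg]
    rw [hs2]
    field_simp
    ring
  -- g r > 0
  have hgr : 0 < g r := by
    rw [hg]; positivity
  -- g r ≠ N
  have hgrN : g r ≠ N := by
    intro h
    rw [hg] at h
    have hd := hden r
    field_simp at h
    have h3 : r ^ 2 * (1 - σw ^ 2) = N * σb ^ 2 := by nlinarith
    have h4 : r ^ 2 = N * σb ^ 2 / (1 - σw ^ 2) := by
      field_simp; linarith
    have : r = s := by
      have := hs2
      nlinarith [hs0, hr]
    exact hne this
  -- log inequality: for x > 0, x ≠ N, N - N log N < x - N log x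
  rw [hf, hf, hgs]
  have hx := hgr
  have hratio : g r / N ≠ 1 := by
    intro h
    apply hgrN
    field_simp at h
    linarith
  have hlog := Real.log_lt_sub_one_of_pos (by positivity : (0:ℝ) < g r / N) hratio
  rw [Real.log_div (ne_of_gt hx) (ne_of_gt hNR)] at hlog
  have hdiv : (N:ℝ) * (g r / N) = g r := by field_simp
  nlinarith [mul_lt_mul_of_pos_left hlog hNR]
end

section
/- Let N be a positive integer and σ_w, σ_b > 0 with σ_w² ≥ 1. Define g: (0,∞) → ℝ by g(r) = r²/(σ_w² r²/N + σ_b²) and f: (0,∞) → ℝ by f(r) = g(r) − N log g(r). Then f is strictly decreasing on (0,∞); in particular f has no minimizer. -/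
/-- For `σ_w² ≥ 1`, the uniform ring energy density
`f(r) = g(r) − N log g(r)` with `g(r) = r²/(σ_w² r²/N + σ_b²)` is strictly decreasing on
`(0, ∞)`; in particular it has no minimizer on `(0, ∞)`. -/
theorem linear_ring_uniform_no_min
    (N : ℕ) (hN : 0 < N) (σw σb : ℝ) (hσw : 0 < σw) (hσb : 0 < σb)
    (hσw1 : 1 ≤ σw ^ 2)
    (g f : ℝ → ℝ)
    (hg : ∀ r, g r = r ^ 2 / (σw ^ 2 * r ^ 2 / N + σb ^ 2))
    (hf : ∀ r, f r = g r - N * Real.log (g r)) :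
    StrictAntiOn f (Set.Ioi 0) ∧
      ¬∃ r ∈ Set.Ioi (0 : ℝ), ∀ s ∈ Set.Ioi (0 : ℝ), f r ≤ f s := by
  have hNpos : (0:ℝ) < N := by exact_mod_cast hN
  have hD : ∀ r : ℝ, 0 < r → 0 < σw ^ 2 * r ^ 2 / N + σb ^ 2 := by
    intro r hr; positivity
  have hgpos : ∀ r : ℝ, 0 < r → 0 < g r := by
    intro r hr; rw [hg]; positivity
  have hglt : ∀ r : ℝ, 0 < r → g r < N := by
    intro r hr
    rw [hg]
    have h1 : r ^ 2 / (σw ^ 2 * r ^ 2 / N + σb ^ 2) < r ^ 2 / (σw ^ 2 * r ^ 2 / N) := by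
      apply div_lt_div_of_pos_left (by positivity) (by positivity)
      nlinarith [sq_nonneg σb]
    have h2 : r ^ 2 / (σw ^ 2 * r ^ 2 / N) = N / σw ^ 2 := by
      field_simp
    have h3 : (N : ℝ) / σw ^ 2 ≤ N := div_le_self hNpos.le hσw1
    linarith
  have hmono : ∀ x y : ℝ, 0 < x → x < y → g x < g y := by
    intro x y hx hxy
    have hy : 0 < y := hx.trans hxy
    rw [hg, hg, div_lt_div_iff₀ (hD x hx) (hD y hy)]
    have h2 : x ^ 2 < y ^ 2 := by nlinarith
    have h3 := mul_lt_mul_of_pos_left h2 (pow_pos hσb 2)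
    have expand : x ^ 2 * (σw ^ 2 * y ^ 2 / ↑N + σb ^ 2) - y ^ 2 * (σw ^ 2 * x ^ 2 / ↑N + σb ^ 2)
        = σb ^ 2 * x ^ 2 - σb ^ 2 * y ^ 2 := by ring
    linarith
  have key : ∀ x ∈ Set.Ioi (0:ℝ), ∀ y ∈ Set.Ioi (0:ℝ), x < y → f y < f x := by
    intro x hx y hy hxy
    simp only [Set.mem_Ioi] at hx hy
    set a := g x with ha'
    set b := g y with hb'
    have ha : 0 < a := hgpos x hx
    have hab : a < b := hmono x y hx hxy
    have hb : 0 < b := ha.trans hab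
    have hbN : b < N := hglt y hy
    have hL : 0 < Real.log b - Real.log a := by
      have := Real.log_lt_log ha hab
      linarith
    have hlog : Real.log (a / b) < a / b - 1 :=
      Real.log_lt_sub_one_of_pos (div_pos ha hb) (by
        intro h
        rw [div_eq_one_iff_eq hb.ne'] at h
        exact absurd h (ne_of_lt hab))
    rw [Real.log_div ha.ne' hb.ne'] at hlog
    -- multiply by b > 0 : b * (log a - log b) < a - b
    have hmul : b * (Real.log a - Real.log b) < a - b := by
      have h := (mul_lt_mul_of_pos_left hlog hb)
      calc b * (Real.log a - Real.log b) < b * (a / b - 1) := h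
        _ = a - b := by field_simp
    have hNb : b * (Real.log b - Real.log a) ≤ N * (Real.log b - Real.log a) :=
      mul_le_mul_of_nonneg_right hbN.le hL.le
    rw [hf, hf]
    have : b - a < N * (Real.log b - Real.log a) := by nlinarith
    linarith
  constructor
  · intro x hx y hy hxy
    exact key x hx y hy hxy
  · rintro ⟨r, hr, hmin⟩
    have h1 : f (r + 1) < f r := key r hr (r + 1) (by simp only [Set.mem_Ioi] at hr ⊢; linarith) (by linarith)
    have h2 : f r ≤ f (r + 1) := hmin (r + 1) (by simp only [Set.mem_Ioi] at hr ⊢; linarith)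
    linarith
end

section
/- Let L ≥ 3, N a positive integer, σ_w, σ_b > 0 with 0 < σ_w² < 1, and set Δ_w = 1 − σ_w² and r* = √(N σ_b²/Δ_w). Define the ring energy ℒ: (0,∞)^L → ℝ by ℒ(r_0,…,r_{L-1}) = (1/2) Σ_{l=0}^{L-1} [ r_l²/(σ_w² r_{l-1}²/N + σ_b²) − N log( r_l²/(σ_w² r_l²/N + σ_b²) ) ], with the index l−1 taken modulo L. Then at the uniform point r = (r*, …, r*): (i) the gradient of ℒ vanishes, and (ii) for every ε ∈ ℝ^L the Hessian quadratic form satisfies (1/2) ε^T (Hess ℒ)(r) ε = (Δ_w/σ_b²) Σ_{l=0}^{L-1} [ (1 + σ_w⁴) ε_l² − 2 σ_w² ε_l ε_{l-1} ], with indices modulo L. -/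
/-!
Write `a = σ_w²/N` and `b = σ_b²`. The energy is a coupled sum
`Σ_l (p(r_l) q(r_{l-1}) + s(r_l))` with `p(x) = x²/2`, `q(y) = (a y² + b)⁻¹` and
`s(x) = -(N/2) log (x² / (a x² + b))`. For such a sum, at a uniform point `c` the gradient is
`(p'q + pq' + s')(c)` times `(1, …, 1)`, and the Hessian form is
`Σ_l ((p''q + pq'' + s'')(c) ε_l² + 2 p'(c) q'(c) ε_l ε_{l-1})`, once the `ε_{l-1}²` terms are
reindexed along the ring. At `c = r*` one has `a c² + b = σ_b²/Δ_w`, i.e. `c² / (a c² + b) = N`: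
this kills the gradient coefficient and turns the Hessian coefficients into the stated ones.
-/

open ContinuousLinearMap Filter Topology

theorem iteratedFDeriv_two_apply_of_eventually_hasFDerivAt {E F : Type*}
    [NormedAddCommGroup E] [NormedSpace ℝ E] [NormedAddCommGroup F] [NormedSpace ℝ F]
    {f : E → F} {f' : E → E →L[ℝ] F} {f'' : E →L[ℝ] E →L[ℝ] F} {x : E}
    (hf : ∀ᶠ y in 𝓝 x, HasFDerivAt f (f' y) y) (hf' : HasFDerivAt f' f'' x)
    (m : Fin 2 → E) :
    iteratedFDeriv ℝ 2 f x m = f'' (m 0) (m 1) := by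
  have hfderiv : fderiv ℝ f =ᶠ[𝓝 x] f' := hf.mono fun y hy => hy.fderiv
  rw [iteratedFDeriv_two_apply, hfderiv.fderiv_eq, hf'.fderiv]

section CoupledSum

variable {ι : Type*} [Fintype ι] (τ : Equiv.Perm ι)

def coupledSum (p q s : ℝ → ℝ) (r : ι → ℝ) : ℝ :=
  ∑ l, (p (r l) * q (r (τ l)) + s (r l))

variable {τ}

theorem hasFDerivAt_apply_comp {f : ℝ → ℝ} {f' : ℝ} {r : ι → ℝ} {i : ι}
    (hf : HasDerivAt f f' (r i)) :
    HasFDerivAt (fun r : ι → ℝ => f (r i)) (f' • (proj i : (ι → ℝ) →L[ℝ] ℝ)) r :=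
  hf.comp_hasFDerivAt r (hasFDerivAt_apply i r)

theorem hasFDerivAt_apply_mul_apply {f g : ℝ → ℝ} {f' g' : ℝ} {r : ι → ℝ} {i j : ι}
    (hf : HasDerivAt f f' (r i)) (hg : HasDerivAt g g' (r j)) :
    HasFDerivAt (fun r : ι → ℝ => f (r i) * g (r j))
      ((f' * g (r j)) • (proj i : (ι → ℝ) →L[ℝ] ℝ) + (f (r i) * g') • proj j) r := by
  refine ((hasFDerivAt_apply_comp hf).fun_mul (hasFDerivAt_apply_comp hg)).congr_fderiv ?_
  ext v
  simp only [add_apply, smul_apply, proj_apply, smul_eq_mul]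
  ring

theorem hasFDerivAt_coupledSum {p p' q q' s s' : ℝ → ℝ} {r : ι → ℝ}
    (hp : ∀ i, HasDerivAt p (p' (r i)) (r i)) (hq : ∀ i, HasDerivAt q (q' (r i)) (r i))
    (hs : ∀ i, HasDerivAt s (s' (r i)) (r i)) :
    HasFDerivAt (coupledSum τ p q s)
      (∑ l, ((p' (r l) * q (r (τ l)) + s' (r l)) • (proj l : (ι → ℝ) →L[ℝ] ℝ) +
        (p (r l) * q' (r (τ l))) • proj (τ l))) r := by
  refine (HasFDerivAt.fun_sum fun l _ => (hasFDerivAt_apply_mul_apply (hp l) (hq (τ l))).add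
    (hasFDerivAt_apply_comp (hs l))).congr_fderiv ?_
  refine Finset.sum_congr rfl fun l _ => ?_
  rw [add_smul]; abel

theorem fderiv_coupledSum_const {p q s : ℝ → ℝ} {p' q' s' c : ℝ}
    (hp : HasDerivAt p p' c) (hq : HasDerivAt q q' c) (hs : HasDerivAt s s' c) :
    fderiv ℝ (coupledSum τ p q s) (fun _ => c) =
      (p' * q c + p c * q' + s') • ∑ l, (proj l : (ι → ℝ) →L[ℝ] ℝ) := by
  rw [(hasFDerivAt_coupledSum (p' := fun _ => p') (q' := fun _ => q') (s' := fun _ => s')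
    (fun _ => hp) (fun _ => hq) (fun _ => hs)).fderiv]
  ext v
  simp only [FunLike.coe_sum, Finset.sum_apply, add_apply, smul_apply, proj_apply, smul_eq_mul,
    Finset.sum_add_distrib, ← Finset.mul_sum, Equiv.sum_comp τ v]
  ring

theorem iteratedFDeriv_two_coupledSum_const {U : Set ℝ} (hU : IsOpen U)
    {p p' q q' s s' : ℝ → ℝ} {c p'' q'' s'' : ℝ} (hc : c ∈ U)
    (hp : ∀ x ∈ U, HasDerivAt p (p' x) x) (hq : ∀ x ∈ U, HasDerivAt q (q' x) x)
    (hs : ∀ x ∈ U, HasDerivAt s (s' x) x)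
    (hp' : HasDerivAt p' p'' c) (hq' : HasDerivAt q' q'' c) (hs' : HasDerivAt s' s'' c)
    (ε : ι → ℝ) :
    iteratedFDeriv ℝ 2 (coupledSum τ p q s) (fun _ => c) (fun _ => ε) =
      ∑ l, ((p'' * q c + p c * q'' + s'') * ε l ^ 2 +
        2 * (p' c * q' c) * (ε l * ε (τ l))) := by
  have hU_near : ∀ᶠ r in 𝓝 (fun _ : ι => c), ∀ i, r i ∈ U :=
    eventually_all.2 fun i => (continuous_apply i).continuousAt.preimage_mem_nhds (hU.mem_nhds hc)
  have hgrad := hU_near.mono fun r hr => hasFDerivAt_coupledSum (τ := τ)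
    (fun i => hp _ (hr i)) (fun i => hq _ (hr i)) (fun i => hs _ (hr i))
  have hhess := HasFDerivAt.fun_sum (u := Finset.univ) fun l _ =>
    (((hasFDerivAt_apply_mul_apply (r := fun _ : ι => c) (i := l) (j := τ l) hp' (hq c hc))
      |>.fun_add (hasFDerivAt_apply_comp (i := l) hs')).smul_const
        (proj l : (ι → ℝ) →L[ℝ] ℝ)).fun_add
    ((hasFDerivAt_apply_mul_apply (i := l) (j := τ l) (hp c hc) hq').smul_const
      (proj (τ l) : (ι → ℝ) →L[ℝ] ℝ))
  rw [iteratedFDeriv_two_apply_of_eventually_hasFDerivAt hgrad hhess]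
  simp only [FunLike.coe_sum, Finset.sum_apply, add_apply, smul_apply, smulRight_apply,
    proj_apply, smul_eq_mul]
  have hshift : ∑ l, p c * q'' * ε (τ l) ^ 2 = ∑ l, p c * q'' * ε l ^ 2 :=
    Equiv.sum_comp τ fun l => p c * q'' * ε l ^ 2
  calc _ = ∑ l, ((p'' * q c + s'') * ε l ^ 2 + 2 * (p' c * q' c) * (ε l * ε (τ l)) +
          p c * q'' * ε (τ l) ^ 2) := Finset.sum_congr rfl fun l _ => by ring
    _ = _ := by
      rw [Finset.sum_add_distrib, hshift, ← Finset.sum_add_distrib]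
      exact Finset.sum_congr rfl fun l _ => by ring

end CoupledSum

open Real

theorem hasDerivAt_half_sq (x : ℝ) : HasDerivAt (fun x : ℝ => x ^ 2 / 2) x x := by
  simpa using (hasDerivAt_pow 2 x).div_const 2

theorem hasDerivAt_quadratic (a b x : ℝ) :
    HasDerivAt (fun x => a * x ^ 2 + b) (2 * a * x) x := by
  simpa [mul_comm, mul_left_comm] using ((hasDerivAt_pow 2 x).const_mul a).add_const b

section QuadraticDenominator

variable {a b : ℝ}

theorem hasDerivAt_inv_quadratic (ha : 0 ≤ a) (hb : 0 < b) (y : ℝ) :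
    HasDerivAt (fun y => (a * y ^ 2 + b)⁻¹) (-2 * a * y / (a * y ^ 2 + b) ^ 2) y :=
  ((hasDerivAt_quadratic a b y).fun_inv (by positivity)).congr_deriv (by ring)

theorem hasDerivAt_deriv_inv_quadratic (ha : 0 ≤ a) (hb : 0 < b) (y : ℝ) :
    HasDerivAt (fun y => -2 * a * y / (a * y ^ 2 + b) ^ 2)
      ((6 * a ^ 2 * y ^ 2 - 2 * a * b) / (a * y ^ 2 + b) ^ 3) y := by
  have hd : a * y ^ 2 + b ≠ 0 := by positivity
  refine (((hasDerivAt_id' y).const_mul (-2 * a)).fun_div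
    ((hasDerivAt_quadratic a b y).fun_pow 2) (pow_ne_zero 2 hd)).congr_deriv ?_
  field_simp
  ring

theorem hasDerivAt_neg_log_ratio (ha : 0 ≤ a) (hb : 0 < b) (n : ℝ) {x : ℝ} (hx : x ≠ 0) :
    HasDerivAt (fun x => -(n / 2) * log (x ^ 2 / (a * x ^ 2 + b)))
      (n * a * x / (a * x ^ 2 + b) - n / x) x := by
  have hd : a * x ^ 2 + b ≠ 0 := by positivity
  refine ((((hasDerivAt_pow 2 x).fun_div (hasDerivAt_quadratic a b x) hd).log
    (by positivity)).const_mul (-(n / 2))).congr_deriv ?_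
  field_simp
  ring

theorem hasDerivAt_deriv_neg_log_ratio (ha : 0 ≤ a) (hb : 0 < b) (n : ℝ) {x : ℝ}
    (hx : x ≠ 0) :
    HasDerivAt (fun x => n * a * x / (a * x ^ 2 + b) - n / x)
      (n * a * (b - a * x ^ 2) / (a * x ^ 2 + b) ^ 2 + n / x ^ 2) x := by
  have hd : a * x ^ 2 + b ≠ 0 := by positivity
  refine ((((hasDerivAt_id' x).const_mul (n * a)).fun_div (hasDerivAt_quadratic a b x) hd)
    |>.fun_sub ((hasDerivAt_inv hx).const_mul n)).congr_deriv ?_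
  field_simp
  ring

end QuadraticDenominator

/-- For the linear stochastic network on a ring of depth `L ≥ 3` and width `N`,
with `0 < σ_w² < 1`, `Δ_w = 1 − σ_w²`, `r* = √(N σ_b²/Δ_w)`: at the uniform configuration
`r = (r*, …, r*)` the gradient of the ring energy `ℒ` vanishes and the Hessian quadratic
form is `(1/2) ε ⬝ Hess ℒ ⬝ ε = (Δ_w/σ_b²) Σ_l [(1+σ_w⁴) ε_l² − 2σ_w² ε_l ε_{l−1}]`. -/
theorem linear_ring_saddle_point_expansion
    (L : ℕ) (hL : 3 ≤ L) (N : ℕ) (hN : 0 < N)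
    (σw σb : ℝ) (hσw1 : σw ^ 2 < 1) (hσb : 0 < σb)
    (Δw : ℝ) (hΔw : Δw = 1 - σw ^ 2)
    (rs : ℝ) (hrs : rs = Real.sqrt (N * σb ^ 2 / Δw))
    (ℒ : (Fin L → ℝ) → ℝ)
    (hℒ : ∀ r : Fin L → ℝ, ℒ r = (1 / 2) * ∑ l : Fin L,
      (r l ^ 2 / (σw ^ 2 * r (l - ⟨1, by omega⟩) ^ 2 / N + σb ^ 2) -
        N * Real.log (r l ^ 2 / (σw ^ 2 * r l ^ 2 / N + σb ^ 2)))) :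
    fderiv ℝ ℒ (fun _ => rs) = 0 ∧
      ∀ ε : Fin L → ℝ,
        (1 / 2) * iteratedFDeriv ℝ 2 ℒ (fun _ => rs) (fun _ => ε) =
          (Δw / σb ^ 2) * ∑ l : Fin L,
            ((1 + σw ^ 4) * ε l ^ 2 - 2 * σw ^ 2 * ε l * ε (l - ⟨1, by omega⟩)) := by
  have : NeZero L := ⟨by omega⟩
  have ha : 0 ≤ σw ^ 2 / N := by positivity
  have hb : 0 < σb ^ 2 := by positivity
  have hΔ : 0 < Δw := by linarith
  have hrs_pos : 0 < rs := hrs ▸ Real.sqrt_pos.2 (by positivity)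
  have hN_eq : (N : ℝ) = rs ^ 2 * Δw / σb ^ 2 := by
    rw [hrs, Real.sq_sqrt (by positivity)]; field_simp
  have hd : σw ^ 2 / N * rs ^ 2 + σb ^ 2 = σb ^ 2 / Δw := by
    rw [hN_eq]; field_simp; linear_combination hΔw
  have hNa : (N : ℝ) * (σw ^ 2 / N) = σw ^ 2 := by field_simp
  have hℒ_eq : ℒ = coupledSum (Equiv.subRight ⟨1, by omega⟩) (fun x => x ^ 2 / 2)
      (fun y => (σw ^ 2 / N * y ^ 2 + σb ^ 2)⁻¹)
      (fun x => -(N / 2) * Real.log (x ^ 2 / (σw ^ 2 / N * x ^ 2 + σb ^ 2))) := by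
    ext r
    rw [hℒ, coupledSum, Finset.mul_sum]
    refine Finset.sum_congr rfl fun l _ => ?_
    simp only [Equiv.subRight_apply, mul_div_right_comm (σw ^ 2)]
    ring
  subst hℒ_eq
  constructor
  · rw [fderiv_coupledSum_const (hasDerivAt_half_sq rs) (hasDerivAt_inv_quadratic ha hb rs)
      (hasDerivAt_neg_log_ratio ha hb N hrs_pos.ne')]
    refine smul_eq_zero.2 (Or.inl ?_)
    rw [hd, hNa, hN_eq]
    field_simp
    ring
  · intro ε
    rw [iteratedFDeriv_two_coupledSum_const isOpen_Ioi hrs_pos (fun x _ => hasDerivAt_half_sq x)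
      (fun y _ => hasDerivAt_inv_quadratic ha hb y)
      (fun x hx => hasDerivAt_neg_log_ratio ha hb N (ne_of_gt hx)) (hasDerivAt_id rs)
      (hasDerivAt_deriv_inv_quadratic ha hb rs)
      (hasDerivAt_deriv_neg_log_ratio ha hb N hrs_pos.ne')]
    rw [Finset.mul_sum, Finset.mul_sum]
    refine Finset.sum_congr rfl fun l _ => ?_
    rw [hd, hNa, hN_eq, Equiv.subRight_apply]
    field_simp
    ring
end

section
/- Let N ≥ 2 be an integer. For x ∈ ℝ^N write x₊ for the vector of components max(x_i, 0) and x₋ for the vector of components min(x_i, 0), and ‖·‖ for the Euclidean norm. For an integer m ≥ 1 set S_m = π^{m/2} / (2^{m−1} Γ(m/2)). Then for every measurable function F: [0,∞) × [0,∞) → [0,∞), ∫_{ℝ^N} F(‖x₊‖, ‖x₋‖) dx = S_N ∫_0^∞ r^{N−1} F(r, 0) dr + S_N ∫_0^∞ r^{N−1} F(0, r) dr + Σ_{k=1}^{N−1} (N choose k) S_{N−k} S_k ∫_0^∞ ∫_0^∞ r₊^{N−k−1} r₋^{k−1} F(r₊, r₋) dr₋ dr₊, where k indexes orthants with k strictly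 negative components, (N choose k) is the binomial coefficient, and the integrals are Lebesgue integrals of nonnegative functions. -/
/-!
Up to the null coordinate hyperplanes, `ℝᴺ` is the disjoint union of the `2ᴺ` open orthants,
indexed by the set `s` of negative coordinates. Reflecting the coordinates in `s` maps that
orthant onto the positive orthant and turns `(‖x₊‖, ‖x₋‖)` into the norms of the two coordinate
blocks `x|sᶜ` and `x|s`. Fubini over these blocks and polar coordinates in each of them give
`S_{N-k} S_k ∫∫ r₊^{N-k-1} r₋^{k-1} F` with `k = |s|`; the `(N choose k)` orthants with `k`
negative coordinates contribute equally, and `k = 0`, `k = N` give the two one-block terms.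
The constant `S_m` comes from polar coordinates on all of `ℝᵐ`, where reflection symmetry makes
each of the `2ᵐ` orthants carry the same share.
-/

open MeasureTheory Set
open scoped ENNReal

theorem lintegral_fun_norm_addHaar {E : Type*} [NormedAddCommGroup E] [NormedSpace ℝ E]
    [FiniteDimensional ℝ E] [MeasurableSpace E] [BorelSpace E] [Nontrivial E] (μ : Measure E)
    [μ.IsAddHaarMeasure] {g : ℝ → ℝ≥0∞} (hg : Measurable g) :
    ∫⁻ x, g ‖x‖ ∂μ = Module.finrank ℝ E * μ (Metric.ball 0 1) *
      ∫⁻ r in Ioi (0 : ℝ), ENNReal.ofReal (r ^ (Module.finrank ℝ E - 1)) * g r := by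
  have hg' : Measurable fun r : Ioi (0 : ℝ) => g r := hg.comp measurable_subtype_coe
  calc ∫⁻ x, g ‖x‖ ∂μ = ∫⁻ x : ({(0)}ᶜ : Set E), g ‖(x : E)‖ ∂μ.comap (↑) := by
        rw [lintegral_subtype_comap (measurableSet_singleton _).compl fun x => g ‖x‖,
          restrict_compl_singleton]
    _ = ∫⁻ p, g p.2 ∂μ.toSphere.prod (.volumeIoiPow (Module.finrank ℝ E - 1)) := by
        rw [← μ.measurePreserving_homeomorphUnitSphereProd.lintegral_comp
          (f := fun p => g p.2) (hg'.comp measurable_snd)]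
        simp
    _ = μ.toSphere univ * ∫⁻ r, g r ∂.volumeIoiPow (Module.finrank ℝ E - 1) := by
        rw [lintegral_prod (fun p : _ × Ioi (0 : ℝ) => g p.2)
          (hg'.comp measurable_snd).aemeasurable]
        simp only [lintegral_const, mul_comm]
    _ = _ := by
        rw [Measure.toSphere_apply_univ, Measure.volumeIoiPow,
          lintegral_withDensity_eq_lintegral_mul _
            (measurable_subtype_coe.pow_const _).ennreal_ofReal hg',
          ← lintegral_subtype_comap measurableSet_Ioi
            fun r : ℝ => ENNReal.ofReal (r ^ (Module.finrank ℝ E - 1)) * g r]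
        rfl

/-- `|S^{m-1}| / 2^m`, the area of the part of the unit sphere of `ℝᵐ` in one orthant. -/
noncomputable def orthantSphereArea (m : ℕ) : ℝ≥0∞ :=
  ENNReal.ofReal (Real.pi ^ ((m : ℝ) / 2) / (2 ^ (m - 1) * Real.Gamma (m / 2)))

theorem orthantSphereArea_ne_top (m : ℕ) : orthantSphereArea m ≠ ∞ := ENNReal.ofReal_ne_top

theorem natCast_mul_volume_unitBall_euclideanSpace (ι : Type*) [Fintype ι] [Nonempty ι] :
    Fintype.card ι * volume (Metric.ball (0 : EuclideanSpace ℝ ι) 1) =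
      2 ^ Fintype.card ι * orthantSphereArea (Fintype.card ι) := by
  set m := Fintype.card ι
  have hm : 0 < (m : ℝ) / 2 := by have : 0 < m := Fintype.card_pos; positivity
  have key : (m : ℝ) * (√Real.pi ^ m / Real.Gamma (m / 2 + 1)) =
      2 ^ m * (Real.pi ^ ((m : ℝ) / 2) / (2 ^ (m - 1) * Real.Gamma (m / 2))) := by
    have h2 : (2 : ℝ) ^ m = 2 ^ (m - 1) * 2 := by
      rw [← pow_succ, Nat.sub_add_cancel Fintype.card_pos]
    rw [Real.Gamma_add_one hm.ne', Real.sqrt_eq_rpow, ← Real.rpow_natCast,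
      ← Real.rpow_mul Real.pi_pos.le, h2]
    have := (Real.Gamma_pos_of_pos hm).ne'
    have : (m : ℝ) ≠ 0 := by positivity
    field_simp
  rw [EuclideanSpace.volume_ball, ENNReal.ofReal_one, one_pow, one_mul, orthantSphereArea,
    ← ENNReal.ofReal_natCast, ← ENNReal.ofReal_mul (Nat.cast_nonneg m), key,
    ENNReal.ofReal_mul (by positivity), ENNReal.ofReal_pow zero_le_two, ENNReal.ofReal_ofNat]

theorem lintegral_sqrt_sum_sq {ι : Type*} [Fintype ι] [Nonempty ι] {g : ℝ → ℝ≥0∞}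
    (hg : Measurable g) :
    ∫⁻ x : ι → ℝ, g √(∑ i, x i ^ 2) = 2 ^ Fintype.card ι * orthantSphereArea (Fintype.card ι) *
      ∫⁻ r in Ioi (0 : ℝ), ENNReal.ofReal (r ^ (Fintype.card ι - 1)) * g r := by
  have hnorm (x : ι → ℝ) : √(∑ i, x i ^ 2) = ‖WithLp.toLp 2 x‖ := by
    simp [EuclideanSpace.norm_eq]
  simp_rw [hnorm]
  rw [(PiLp.volume_preserving_toLp ι).lintegral_comp_emb
      (MeasurableEquiv.toLp 2 _).measurableEmbedding fun y => g ‖y‖,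
    lintegral_fun_norm_addHaar volume hg, finrank_euclideanSpace,
    natCast_mul_volume_unitBall_euclideanSpace]

def positiveOrthant (ι : Type*) : Set (ι → ℝ) := univ.pi fun _ => Ioi 0

theorem measurableSet_positiveOrthant {ι : Type*} [Countable ι] :
    MeasurableSet (positiveOrthant ι) :=
  .univ_pi fun _ => measurableSet_Ioi

section Orthant

variable {ι : Type*} [DecidableEq ι]

def reflect (s : Finset ι) (x : ι → ℝ) : ι → ℝ := fun i => if i ∈ s then -x i else x i

def orthant (s : Finset ι) : Set (ι → ℝ) := reflect s ⁻¹' positiveOrthant ι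

theorem reflect_reflect (s : Finset ι) (x : ι → ℝ) : reflect s (reflect s x) = x := by
  ext i
  by_cases hi : i ∈ s <;> simp [reflect, hi]

theorem sq_reflect (s : Finset ι) (x : ι → ℝ) (i : ι) : reflect s x i ^ 2 = x i ^ 2 := by
  by_cases hi : i ∈ s <;> simp [reflect, hi]

theorem measurePreserving_reflect [Fintype ι] (s : Finset ι) :
    MeasurePreserving (reflect s) (volume : Measure (ι → ℝ)) volume :=
  measurePreserving_pi _ _ (f := fun i (y : ℝ) => if i ∈ s then -y else y) fun i => by
    by_cases hi : i ∈ s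
    · simpa only [hi, if_true] using Measure.measurePreserving_neg (volume : Measure ℝ)
    · simp only [hi, if_false]
      exact MeasurePreserving.id volume

theorem setLIntegral_orthant [Fintype ι] (s : Finset ι) {f : (ι → ℝ) → ℝ≥0∞}
    (hf : Measurable f) :
    ∫⁻ x in orthant s, f x = ∫⁻ x in positiveOrthant ι, f (reflect s x) := by
  have hmp := measurePreserving_reflect s
  conv_lhs => enter [2, x]; rw [← reflect_reflect s x]
  exact hmp.setLIntegral_comp_preimage measurableSet_positiveOrthant (hf.comp hmp.measurable)

theorem eq_filter_neg_of_mem_orthant [Fintype ι] {s : Finset ι} {x : ι → ℝ}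
    (hx : x ∈ orthant s) : s = Finset.univ.filter fun i => x i < 0 := by
  ext i
  have hi := hx i (mem_univ i)
  by_cases his : i ∈ s <;> simp_all [reflect, not_lt_of_gt]

theorem mem_orthant_filter_neg [Fintype ι] {x : ι → ℝ} (hx : ∀ i, x i ≠ 0) :
    x ∈ orthant (Finset.univ.filter fun i => x i < 0) := by
  intro i _
  by_cases hi : x i < 0
  · simp [reflect, hi]
  · simpa [reflect, hi] using lt_of_le_of_ne (not_lt.1 hi) (hx i).symm

theorem lintegral_eq_sum_orthant [Fintype ι] (f : (ι → ℝ) → ℝ≥0∞) :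
    ∫⁻ x, f x = ∑ s : Finset ι, ∫⁻ x in orthant s, f x := by
  have hcover : ∀ᵐ x : ι → ℝ, x ∈ ⋃ s ∈ (Finset.univ : Finset (Finset ι)), orthant s := by
    have : ∀ᵐ x : ι → ℝ, ∀ i, x i ≠ 0 := ae_all_iff.2 fun i => by
      simpa [ae_iff, volume_pi] using Measure.pi_hyperplane (fun _ => volume) i 0
    filter_upwards [this] with x hx
    exact mem_biUnion (Finset.mem_univ _) (mem_orthant_filter_neg hx)
  conv_lhs => rw [← Measure.restrict_eq_self_of_ae_mem hcover]
  refine lintegral_biUnion_finset (fun s _ t _ hst => ?_) (fun s _ => ?_) f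
  · exact disjoint_left.2 fun x hs ht =>
      hst ((eq_filter_neg_of_mem_orthant hs).trans (eq_filter_neg_of_mem_orthant ht).symm)
  · exact (measurePreserving_reflect s).measurable measurableSet_positiveOrthant

end Orthant

theorem setLIntegral_positiveOrthant_sqrt_sum_sq {ι : Type*} [Fintype ι] [Nonempty ι]
    {g : ℝ → ℝ≥0∞} (hg : Measurable g) :
    ∫⁻ x in positiveOrthant ι, g √(∑ i, x i ^ 2) = orthantSphereArea (Fintype.card ι) *
      ∫⁻ r in Ioi (0 : ℝ), ENNReal.ofReal (r ^ (Fintype.card ι - 1)) * g r := by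
  classical
  have hf : Measurable fun x : ι → ℝ => g √(∑ i, x i ^ 2) := by fun_prop
  have hsum := lintegral_sqrt_sum_sq (ι := ι) hg
  simp_rw [lintegral_eq_sum_orthant, setLIntegral_orthant _ hf, sq_reflect, Finset.sum_const,
    Finset.card_univ, Fintype.card_finset, nsmul_eq_mul, Nat.cast_pow, Nat.cast_ofNat,
    mul_assoc] at hsum
  exact (ENNReal.mul_right_inj (by positivity) (by simp)).1 hsum

theorem setLIntegral_positiveOrthant_piEquivPiSubtypeProd {ι : Type*} [Fintype ι] (p : ι → Prop)
    [DecidablePred p] {f : ({i // p i} → ℝ) × ({i // ¬p i} → ℝ) → ℝ≥0∞} (hf : Measurable f) :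
    ∫⁻ x in positiveOrthant ι, f (MeasurableEquiv.piEquivPiSubtypeProd (fun _ => ℝ) p x) =
      ∫⁻ y in positiveOrthant _, ∫⁻ z in positiveOrthant _, f (y, z) := by
  have hpre : positiveOrthant ι =
      MeasurableEquiv.piEquivPiSubtypeProd (fun _ => ℝ) p ⁻¹'
        (positiveOrthant _ ×ˢ positiveOrthant _) := by
    ext x
    simp only [positiveOrthant, mem_preimage, mem_prod, mem_univ_pi]
    exact ⟨fun h => ⟨fun i => h i, fun i => h i⟩,
      fun h i => if hi : p i then h.1 ⟨i, hi⟩ else h.2 ⟨i, hi⟩⟩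
  rw [hpre, (volume_preserving_piEquivPiSubtypeProd (fun _ => ℝ) p).setLIntegral_comp_preimage_emb
    (MeasurableEquiv.measurableEmbedding _), Measure.volume_eq_prod, ← Measure.prod_restrict,
    lintegral_prod _ hf.aemeasurable]

theorem setLIntegral_positiveOrthant_prod_sqrt_sum_sq {ι κ : Type*} [Fintype ι] [Nonempty ι]
    [Fintype κ] [Nonempty κ] {F : ℝ → ℝ → ℝ≥0∞} (hF : Measurable (Function.uncurry F)) :
    ∫⁻ y in positiveOrthant ι, ∫⁻ z in positiveOrthant κ,
        F √(∑ i, y i ^ 2) √(∑ j, z j ^ 2) =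
      orthantSphereArea (Fintype.card ι) * orthantSphereArea (Fintype.card κ) *
        ∫⁻ rp in Ioi (0 : ℝ), ∫⁻ rm in Ioi (0 : ℝ),
          ENNReal.ofReal (rp ^ (Fintype.card ι - 1) * rm ^ (Fintype.card κ - 1)) * F rp rm := by
  have hinner : Measurable fun rp => ∫⁻ rm in Ioi (0 : ℝ),
      ENNReal.ofReal (rm ^ (Fintype.card κ - 1)) * F rp rm :=
    (((measurable_snd.pow_const _).ennreal_ofReal).mul hF).lintegral_prod_right'
  have hκ (a : ℝ) := setLIntegral_positiveOrthant_sqrt_sum_sq (ι := κ) (g := F a)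
    (hF.comp measurable_prodMk_left)
  simp_rw [hκ, lintegral_const_mul' _ _ (orthantSphereArea_ne_top _)]
  rw [setLIntegral_positiveOrthant_sqrt_sum_sq hinner, mul_comm _ (orthantSphereArea _),
    ← mul_assoc]
  refine congrArg _ (setLIntegral_congr_fun measurableSet_Ioi fun rp hrp => ?_)
  simp_rw [← lintegral_const_mul' _ _ ENNReal.ofReal_ne_top, ← mul_assoc,
    ENNReal.ofReal_mul (pow_nonneg (le_of_lt hrp) _)]

section PosNegParts

variable {ι : Type*} [Fintype ι] [DecidableEq ι] {F : ℝ → ℝ → ℝ≥0∞}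

theorem sum_max_sq_reflect {x : ι → ℝ} (hx : x ∈ positiveOrthant ι) (s : Finset ι) :
    ∑ i, max (reflect s x i) 0 ^ 2 = ∑ i ∈ sᶜ, x i ^ 2 := by
  rw [← Finset.sum_ite_mem_eq sᶜ]
  refine Finset.sum_congr rfl fun i _ => ?_
  have hi : 0 < x i := hx i (mem_univ i)
  by_cases his : i ∈ s <;> simp [reflect, his, hi.le]

theorem sum_min_sq_reflect {x : ι → ℝ} (hx : x ∈ positiveOrthant ι) (s : Finset ι) :
    ∑ i, min (reflect s x i) 0 ^ 2 = ∑ i ∈ s, x i ^ 2 := by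
  rw [← Finset.sum_ite_mem_eq s]
  refine Finset.sum_congr rfl fun i _ => ?_
  have hi : 0 < x i := hx i (mem_univ i)
  by_cases his : i ∈ s <;> simp [reflect, his, hi.le]

theorem setLIntegral_orthant_posPart_negPart_eq_positiveOrthant (s : Finset ι)
    (hF : Measurable (Function.uncurry F)) :
    ∫⁻ x in orthant s, F √(∑ i, max (x i) 0 ^ 2) √(∑ i, min (x i) 0 ^ 2) =
      ∫⁻ x in positiveOrthant ι, F √(∑ i ∈ sᶜ, x i ^ 2) √(∑ i ∈ s, x i ^ 2) := by
  rw [setLIntegral_orthant s (by fun_prop)]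
  refine setLIntegral_congr_fun measurableSet_positiveOrthant fun x hx => ?_
  rw [sum_max_sq_reflect hx, sum_min_sq_reflect hx]

theorem setLIntegral_orthant_empty_posPart_negPart [Nonempty ι]
    (hF : Measurable (Function.uncurry F)) :
    ∫⁻ x in orthant (∅ : Finset ι), F √(∑ i, max (x i) 0 ^ 2) √(∑ i, min (x i) 0 ^ 2) =
      orthantSphereArea (Fintype.card ι) *
        ∫⁻ r in Ioi (0 : ℝ), ENNReal.ofReal (r ^ (Fintype.card ι - 1)) * F r 0 := by
  rw [setLIntegral_orthant_posPart_negPart_eq_positiveOrthant ∅ hF, Finset.compl_empty]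
  simpa using setLIntegral_positiveOrthant_sqrt_sum_sq (ι := ι) (g := (F · 0)) (by fun_prop)

theorem setLIntegral_orthant_univ_posPart_negPart [Nonempty ι]
    (hF : Measurable (Function.uncurry F)) :
    ∫⁻ x in orthant (Finset.univ : Finset ι), F √(∑ i, max (x i) 0 ^ 2) √(∑ i, min (x i) 0 ^ 2) =
      orthantSphereArea (Fintype.card ι) *
        ∫⁻ r in Ioi (0 : ℝ), ENNReal.ofReal (r ^ (Fintype.card ι - 1)) * F 0 r := by
  rw [setLIntegral_orthant_posPart_negPart_eq_positiveOrthant Finset.univ hF, Finset.compl_univ]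
  simpa using setLIntegral_positiveOrthant_sqrt_sum_sq (ι := ι) (g := F 0) (by fun_prop)

theorem setLIntegral_orthant_posPart_negPart_of_nonempty {s : Finset ι} (hs : s.Nonempty)
    (hsc : sᶜ.Nonempty) (hF : Measurable (Function.uncurry F)) :
    ∫⁻ x in orthant s, F √(∑ i, max (x i) 0 ^ 2) √(∑ i, min (x i) 0 ^ 2) =
      orthantSphereArea (Fintype.card ι - s.card) * orthantSphereArea s.card *
        ∫⁻ rp in Ioi (0 : ℝ), ∫⁻ rm in Ioi (0 : ℝ),
          ENNReal.ofReal (rp ^ (Fintype.card ι - s.card - 1) * rm ^ (s.card - 1)) * F rp rm := by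
  have : Nonempty {i // i ∉ s} := let ⟨i, hi⟩ := hsc; ⟨⟨i, Finset.mem_compl.1 hi⟩⟩
  have : Nonempty {i // ¬i ∉ s} := let ⟨i, hi⟩ := hs; ⟨⟨i, not_not.2 hi⟩⟩
  have hcard₁ : Fintype.card {i // i ∉ s} = Fintype.card ι - s.card := by
    rw [Fintype.card_subtype_compl, Fintype.card_coe]
  have hcard₂ : Fintype.card {i // ¬i ∉ s} = s.card := by
    simp only [not_not, Fintype.card_coe]
  rw [setLIntegral_orthant_posPart_negPart_eq_positiveOrthant s hF, ← hcard₁, ← hcard₂,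
    ← setLIntegral_positiveOrthant_prod_sqrt_sum_sq hF,
    ← setLIntegral_positiveOrthant_piEquivPiSubtypeProd (· ∉ s)
      (f := fun q => F √(∑ j, q.1 j ^ 2) √(∑ j, q.2 j ^ 2)) (by fun_prop)]
  refine lintegral_congr fun x => congrArg₂ F (congrArg _ ?_) (congrArg _ ?_)
  · exact Finset.sum_subtype _ (fun _ => Finset.mem_compl) fun i => x i ^ 2
  · exact Finset.sum_subtype _ (fun _ => not_not.symm) fun i => x i ^ 2

theorem sum_powersetCard_setLIntegral_orthant_posPart_negPart {k : ℕ} (hk₀ : 0 < k)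
    (hk : k < Fintype.card ι) (hF : Measurable (Function.uncurry F)) :
    ∑ s ∈ Finset.powersetCard k (Finset.univ : Finset ι),
        ∫⁻ x in orthant s, F √(∑ i, max (x i) 0 ^ 2) √(∑ i, min (x i) 0 ^ 2) =
      ((Fintype.card ι).choose k : ℝ≥0∞) * orthantSphereArea (Fintype.card ι - k) *
        orthantSphereArea k * ∫⁻ rp in Ioi (0 : ℝ), ∫⁻ rm in Ioi (0 : ℝ),
          ENNReal.ofReal (rp ^ (Fintype.card ι - k - 1) * rm ^ (k - 1)) * F rp rm := by
  calc _ = ∑ s ∈ Finset.powersetCard k (Finset.univ : Finset ι),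
        orthantSphereArea (Fintype.card ι - k) * orthantSphereArea k *
          ∫⁻ rp in Ioi (0 : ℝ), ∫⁻ rm in Ioi (0 : ℝ),
            ENNReal.ofReal (rp ^ (Fintype.card ι - k - 1) * rm ^ (k - 1)) * F rp rm := by
        refine Finset.sum_congr rfl fun s hs => ?_
        obtain ⟨-, rfl⟩ := Finset.mem_powersetCard.1 hs
        refine setLIntegral_orthant_posPart_negPart_of_nonempty (Finset.card_pos.1 hk₀) ?_ hF
        rw [← Finset.card_pos, Finset.card_compl]
        omega
    _ = _ := by
        rw [Finset.sum_const, Finset.card_powersetCard, Finset.card_univ, nsmul_eq_mul]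
        ring

end PosNegParts

theorem lintegral_norm_posPart_norm_negPart {ι : Type*} [Fintype ι] [Nonempty ι]
    {F : ℝ → ℝ → ℝ≥0∞} (hF : Measurable (Function.uncurry F)) :
    ∫⁻ x : ι → ℝ, F √(∑ i, max (x i) 0 ^ 2) √(∑ i, min (x i) 0 ^ 2) =
      orthantSphereArea (Fintype.card ι) *
          (∫⁻ r in Ioi (0 : ℝ), ENNReal.ofReal (r ^ (Fintype.card ι - 1)) * F r 0) +
        orthantSphereArea (Fintype.card ι) *
          (∫⁻ r in Ioi (0 : ℝ), ENNReal.ofReal (r ^ (Fintype.card ι - 1)) * F 0 r) +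
        ∑ k ∈ Finset.Ioo 0 (Fintype.card ι), ((Fintype.card ι).choose k : ℝ≥0∞) *
          orthantSphereArea (Fintype.card ι - k) * orthantSphereArea k *
          ∫⁻ rp in Ioi (0 : ℝ), ∫⁻ rm in Ioi (0 : ℝ),
            ENNReal.ofReal (rp ^ (Fintype.card ι - k - 1) * rm ^ (k - 1)) * F rp rm := by
  classical
  set n := Fintype.card ι
  have hn : 0 < n := Fintype.card_pos
  have hrange : Finset.range (n + 1) = insert 0 (insert n (Finset.Ioo 0 n)) := by
    ext k; simp only [Finset.mem_range, Finset.mem_insert, Finset.mem_Ioo]; omega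
  have hmiddle (k : ℕ) (hk : k ∈ Finset.Ioo 0 n) :=
    sum_powersetCard_setLIntegral_orthant_posPart_negPart (Finset.mem_Ioo.1 hk).1
      (Finset.mem_Ioo.1 hk).2 hF
  rw [lintegral_eq_sum_orthant, ← Finset.powerset_univ, Finset.sum_powerset, Finset.card_univ,
    hrange, Finset.sum_insert (by simp; omega), Finset.sum_insert (by simp),
    Finset.powersetCard_zero, show Finset.powersetCard n Finset.univ = {Finset.univ} from
      Finset.powersetCard_self _,
    Finset.sum_singleton, Finset.sum_singleton, setLIntegral_orthant_empty_posPart_negPart hF,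
    setLIntegral_orthant_univ_posPart_negPart hF, Finset.sum_congr rfl hmiddle, add_assoc]

/-- Orthant decomposition of an integral over `ℝ^N` of a function of the
Euclidean norms `‖x₊‖`, `‖x₋‖` of the positive and negative parts of `x`: with
`S_m = π^{m/2}/(2^{m−1} Γ(m/2))` the area of the positive-orthant unit sphere,
`∫ F(‖x₊‖,‖x₋‖) dx = S_N ∫ r^{N−1} F(r,0) dr + S_N ∫ r^{N−1} F(0,r) dr
  + Σ_{k=1}^{N−1} (N choose k) S_{N−k} S_k ∫∫ r₊^{N−k−1} r₋^{k−1} F(r₊,r₋) dr₋ dr₊`. -/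
theorem orthant_decomposition_integral
    (N : ℕ) (hN : 2 ≤ N)
    (S : ℕ → ℝ≥0∞)
    (hS : ∀ m : ℕ, 1 ≤ m →
      S m = ENNReal.ofReal (Real.pi ^ ((m : ℝ) / 2) / (2 ^ (m - 1) * Real.Gamma (m / 2))))
    (F : ℝ → ℝ → ℝ≥0∞) (hF : Measurable (Function.uncurry F)) :
    ∫⁻ x : Fin N → ℝ,
        F (Real.sqrt (∑ i, max (x i) 0 ^ 2)) (Real.sqrt (∑ i, min (x i) 0 ^ 2)) =
      S N * (∫⁻ r in Set.Ioi (0 : ℝ), ENNReal.ofReal (r ^ (N - 1)) * F r 0) +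
        S N * (∫⁻ r in Set.Ioi (0 : ℝ), ENNReal.ofReal (r ^ (N - 1)) * F 0 r) +
        ∑ k ∈ Finset.Ioo 0 N, (N.choose k : ℝ≥0∞) * S (N - k) * S k *
          ∫⁻ rp in Set.Ioi (0 : ℝ), ∫⁻ rm in Set.Ioi (0 : ℝ),
            ENNReal.ofReal (rp ^ (N - k - 1) * rm ^ (k - 1)) * F rp rm := by
  have : Nonempty (Fin N) := ⟨⟨0, by omega⟩⟩
  have hS' : ∀ m, 1 ≤ m → S m = orthantSphereArea m := hS
  rw [lintegral_norm_posPart_norm_negPart hF, Fintype.card_fin, hS' N (by omega)]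
  congr 1
  refine Finset.sum_congr rfl fun k hk => ?_
  rw [Finset.mem_Ioo] at hk
  rw [hS' k (by omega), hS' (N - k) (by omega)]
end

section
/- Let N ≥ 2, σ_w, σ_b > 0 with 0 < σ_w² < 2. Define h: (0,∞) × (0,∞) × (0,N) → ℝ by h(r₊, r₋, k) = (1/2) [ (r₊² + r₋²)/(σ_w² r₊²/N + σ_b²) + N log(σ_w² r₊²/N + σ_b²) + (N − k)(3 log(N − k) − 2 log r₊) + k (3 log k − 2 log r₋) ]. Then h is differentiable and its gradient vanishes at the point r₊ = r₋ = √( N σ_b² / (2 − σ_w²) ), k = N/2. -/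
/-!
All three partial derivatives are explicit. Writing `A = σ_w² r₊²/N + σ_b²`, the `k`-derivative is
`(3 log (k/(N-k)) + 2 log (r₊/r₋))/2`, which vanishes when `k = N - k` and `r₊ = r₋`; the
`r₋`-derivative `r₋/A - k/r₋` and the `r₊`-derivative both vanish once `A = 2r²/N`, and this is
exactly the equation `(2 - σ_w²) r² = N σ_b²` defining the saddle point `r`. The energy is
differentiable there, so vanishing partials give a vanishing Fréchet derivative.
-/

open Real

theorem hasFDerivAt_zero_of_hasDerivAt_lines {F : Type*} [NormedAddCommGroup F]
    [NormedSpace ℝ F] {f : ℝ × ℝ × ℝ → F} {x y z : ℝ} (hf : DifferentiableAt ℝ f (x, y, z))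
    (h₁ : HasDerivAt (fun t => f (t, y, z)) 0 x) (h₂ : HasDerivAt (fun t => f (x, t, z)) 0 y)
    (h₃ : HasDerivAt (fun t => f (x, y, t)) 0 z) :
    HasFDerivAt f (0 : ℝ × ℝ × ℝ →L[ℝ] F) (x, y, z) := by
  have hL := hf.hasFDerivAt
  have e₁ : fderiv ℝ f (x, y, z) (1, 0) = 0 :=
    (hL.comp_hasDerivAt x ((hasDerivAt_id x).prodMk
      ((hasDerivAt_const x y).prodMk (hasDerivAt_const x z)))).unique h₁
  have e₂ : fderiv ℝ f (x, y, z) (0, 1, 0) = 0 :=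
    (hL.comp_hasDerivAt y ((hasDerivAt_const y x).prodMk
      ((hasDerivAt_id y).prodMk (hasDerivAt_const y z)))).unique h₂
  have e₃ : fderiv ℝ f (x, y, z) (0, 0, 1) = 0 :=
    (hL.comp_hasDerivAt z ((hasDerivAt_const z x).prodMk
      ((hasDerivAt_const z y).prodMk (hasDerivAt_id z)))).unique h₃
  convert hL
  ext <;> simp [e₁, e₂, e₃]

/-- The variance `σ_w² r₊²/N + σ_b²` of the next layer's pre-activations. -/
noncomputable def preactVar (N σw σb x : ℝ) : ℝ := σw ^ 2 * x ^ 2 / N + σb ^ 2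

/-- The energy density `h(r₊, r₋, k)` at `p = (r₊, r₋, k)`. -/
noncomputable def uniformEnergy (N σw σb : ℝ) (p : ℝ × ℝ × ℝ) : ℝ := (1 / 2) *
  ((p.1 ^ 2 + p.2.1 ^ 2) / preactVar N σw σb p.1 + N * log (preactVar N σw σb p.1) +
    (N - p.2.2) * (3 * log (N - p.2.2) - 2 * log p.1) +
    p.2.2 * (3 * log p.2.2 - 2 * log p.2.1))

section

variable {N σw σb : ℝ}

theorem preactVar_pos (hN : 0 ≤ N) (hσb : σb ≠ 0) (x : ℝ) : 0 < preactVar N σw σb x :=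
  add_pos_of_nonneg_of_pos (div_nonneg (by positivity) hN) (by positivity)

theorem hasDerivAt_preactVar (x : ℝ) :
    HasDerivAt (preactVar N σw σb) (2 * σw ^ 2 * x / N) x := by
  refine ((((hasDerivAt_pow 2 x).const_mul (σw ^ 2)).div_const N).add_const
    (σb ^ 2)).congr_deriv ?_
  ring

theorem preactVar_eq_of_saddle {r : ℝ} (hN : N ≠ 0) (hr : (2 - σw ^ 2) * r ^ 2 = N * σb ^ 2) :
    preactVar N σw σb r = 2 * r ^ 2 / N := by
  unfold preactVar
  field_simp
  linear_combination -hr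

theorem differentiableAt_uniformEnergy {p : ℝ × ℝ × ℝ} (h₁ : p.1 ≠ 0) (h₂ : p.2.1 ≠ 0)
    (h₃ : p.2.2 ≠ 0) (h₃' : N - p.2.2 ≠ 0) (hA : preactVar N σw σb p.1 ≠ 0) :
    DifferentiableAt ℝ (uniformEnergy N σw σb) p := by
  have hA' : DifferentiableAt ℝ (fun q : ℝ × ℝ × ℝ => preactVar N σw σb q.1) p :=
    (hasDerivAt_preactVar p.1).differentiableAt.comp p differentiableAt_fst
  unfold uniformEnergy
  fun_prop (disch := assumption)

theorem hasDerivAt_uniformEnergy_fst {x : ℝ} (y k : ℝ) (hN : N ≠ 0) (hx : x ≠ 0)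
    (hA : preactVar N σw σb x ≠ 0) :
    HasDerivAt (fun t => uniformEnergy N σw σb (t, y, k))
      (x / preactVar N σw σb x + σw ^ 2 * x / preactVar N σw σb x -
        (x ^ 2 + y ^ 2) * σw ^ 2 * x / (N * preactVar N σw σb x ^ 2) - (N - k) / x) x := by
  have hV := hasDerivAt_preactVar (N := N) (σw := σw) (σb := σb) x
  refine (((((((hasDerivAt_pow 2 x).add_const (y ^ 2)).div hV hA).add
    ((hV.log hA).const_mul N)).add (((hasDerivAt_log hx).const_mul 2).const_sub
      (3 * log (N - k)) |>.const_mul (N - k))).add_const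
      (k * (3 * log k - 2 * log y))).const_mul (1 / 2 : ℝ)).congr_deriv ?_
  field_simp
  ring

theorem hasDerivAt_uniformEnergy_snd_fst (x k : ℝ) {y : ℝ} (hy : y ≠ 0) :
    HasDerivAt (fun t => uniformEnergy N σw σb (x, t, k))
      (y / preactVar N σw σb x - k / y) y := by
  refine (((((((hasDerivAt_pow 2 y).const_add (x ^ 2)).div_const
    (preactVar N σw σb x)).add_const (N * log (preactVar N σw σb x))).add_const
      ((N - k) * (3 * log (N - k) - 2 * log x))).add
    ((((hasDerivAt_log hy).const_mul 2).const_sub (3 * log k)).const_mul k)).const_mul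
      (1 / 2 : ℝ)).congr_deriv ?_
  field_simp
  ring

theorem hasDerivAt_uniformEnergy_snd_snd (x y : ℝ) {k : ℝ} (hk : k ≠ 0) (hNk : N - k ≠ 0) :
    HasDerivAt (fun t => uniformEnergy N σw σb (x, y, t))
      ((3 * (log k - log (N - k)) + 2 * (log x - log y)) / 2) k := by
  have hNt : HasDerivAt (fun t => N - t) (-1) k := (hasDerivAt_id k).const_sub N
  refine ((((hNt.mul (((hNt.log hNk).const_mul 3).sub_const (2 * log x))).const_add
    ((x ^ 2 + y ^ 2) / preactVar N σw σb x + N * log (preactVar N σw σb x))).add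
    ((hasDerivAt_id' k).mul (((hasDerivAt_log hk).const_mul 3).sub_const (2 * log y)))).const_mul
      (1 / 2 : ℝ)).congr_deriv ?_
  field_simp
  ring

end

theorem relu_ring_uniform_saddle_point_general
    (N : ℕ) (hN : 2 ≤ N) (σw σb : ℝ) (hσw2 : σw ^ 2 < 2) (hσb : 0 < σb)
    (h : ℝ × ℝ × ℝ → ℝ)
    (hh : ∀ p : ℝ × ℝ × ℝ, h p = (1 / 2) *
      ((p.1 ^ 2 + p.2.1 ^ 2) / (σw ^ 2 * p.1 ^ 2 / N + σb ^ 2) +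
        N * Real.log (σw ^ 2 * p.1 ^ 2 / N + σb ^ 2) +
        (N - p.2.2) * (3 * Real.log (N - p.2.2) - 2 * Real.log p.1) +
        p.2.2 * (3 * Real.log p.2.2 - 2 * Real.log p.2.1))) :
    DifferentiableOn ℝ h (Set.Ioi 0 ×ˢ Set.Ioi 0 ×ˢ Set.Ioo 0 (N : ℝ)) ∧
      HasFDerivAt h (0 : ℝ × ℝ × ℝ →L[ℝ] ℝ)
        (Real.sqrt (N * σb ^ 2 / (2 - σw ^ 2)),
          Real.sqrt (N * σb ^ 2 / (2 - σw ^ 2)), (N : ℝ) / 2) := by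
  obtain rfl : h = uniformEnergy N σw σb := funext hh
  have hN₀ : (0 : ℝ) < N := by exact_mod_cast (by omega : 0 < N)
  have hσ : 0 < 2 - σw ^ 2 := by linarith
  have hApos := preactVar_pos (σw := σw) hN₀.le hσb.ne'
  set r := √(N * σb ^ 2 / (2 - σw ^ 2))
  have hr : 0 < r := sqrt_pos.2 (by positivity)
  have hA : preactVar N σw σb r = 2 * r ^ 2 / N := by
    refine preactVar_eq_of_saddle hN₀.ne' ?_
    rw [sq_sqrt (by positivity)]
    field_simp
  have hdiff : ∀ p ∈ Set.Ioi 0 ×ˢ Set.Ioi 0 ×ˢ Set.Ioo 0 (N : ℝ),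
      DifferentiableAt ℝ (uniformEnergy N σw σb) p := fun p ⟨h₁, h₂, h₃, h₄⟩ =>
    differentiableAt_uniformEnergy h₁.ne' h₂.ne' h₃.ne' (sub_ne_zero.2 h₄.ne') (hApos _).ne'
  refine ⟨fun p hp => (hdiff p hp).differentiableWithinAt,
    hasFDerivAt_zero_of_hasDerivAt_lines (hdiff _ ⟨hr, hr, by positivity, by linarith⟩) ?_ ?_ ?_⟩
  · refine (hasDerivAt_uniformEnergy_fst r (N / 2) hN₀.ne' hr.ne' (hApos r).ne').congr_deriv ?_
    rw [hA]
    field_simp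
    ring
  · refine (hasDerivAt_uniformEnergy_snd_fst r (N / 2) hr.ne').congr_deriv ?_
    rw [hA]
    field_simp
    ring
  · refine (hasDerivAt_uniformEnergy_snd_snd (N := N) r r (k := N / 2) (by positivity)
      (by linarith)).congr_deriv ?_
    ring_nf

/-- Saddle point of the uniform energy of the rectified linear stochastic
network: the energy density `h(r₊, r₋, k)` is differentiable on
`(0,∞) × (0,∞) × (0,N)` and its gradient vanishes at
`r₊ = r₋ = √(N σ_b²/(2 − σ_w²))`, `k = N/2`. -/
theorem relu_ring_uniform_saddle_point
    (N : ℕ) (hN : 2 ≤ N) (σw σb : ℝ) (hσw : 0 < σw ^ 2) (hσw2 : σw ^ 2 < 2) (hσb : 0 < σb)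
    (h : ℝ × ℝ × ℝ → ℝ)
    (hh : ∀ p : ℝ × ℝ × ℝ, h p = (1 / 2) *
      ((p.1 ^ 2 + p.2.1 ^ 2) / (σw ^ 2 * p.1 ^ 2 / N + σb ^ 2) +
        N * Real.log (σw ^ 2 * p.1 ^ 2 / N + σb ^ 2) +
        (N - p.2.2) * (3 * Real.log (N - p.2.2) - 2 * Real.log p.1) +
        p.2.2 * (3 * Real.log p.2.2 - 2 * Real.log p.2.1))) :
    DifferentiableOn ℝ h (Set.Ioi 0 ×ˢ Set.Ioi 0 ×ˢ Set.Ioo 0 (N : ℝ)) ∧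
      HasFDerivAt h (0 : ℝ × ℝ × ℝ →L[ℝ] ℝ)
        (Real.sqrt (N * σb ^ 2 / (2 - σw ^ 2)),
          Real.sqrt (N * σb ^ 2 / (2 - σw ^ 2)), (N : ℝ) / 2) :=
  relu_ring_uniform_saddle_point_general N hN σw σb hσw2 hσb h hh
end

section
/- Let σ_w ∈ ℝ with 0 < σ_w² < 2 and let q ∈ ℝ. Then the 3 × 3 Hermitian matrix M(q) with rows [ 1 + σ_w⁴/2 − σ_w² cos q, −(σ_w²/2) e^{−iq}, 1/2 ], [ −(σ_w²/2) e^{iq}, 1, −1/2 ], [ 1/2, −1/2, 3 ] is positive definite; that is, w† M(q) w > 0 for every nonzero w ∈ ℂ³. -/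
open scoped ComplexOrder

/-!
With `w = (σ_w² / 2) e^{iq}` the matrix is `Aᴴ D A` for `D = diag(1, 1, 5/2)` and
`A = [[-w, 1, -1/2], [1 - w, 0, 1/2], [0, 0, 1]]`, i.e. the quadratic form is
`|b - w a - c/2|² + |(1 - w) a + c/2|² + (5/2)|c|²`.
Since `det A = w - 1` and `|w| = σ_w²/2 < 1`, `A` is invertible, so `M(q)` is positive definite.
-/

open Complex Matrix

namespace ReluRing

noncomputable def ringMatrix (w : ℂ) : Matrix (Fin 3) (Fin 3) ℂ :=
  !![1 - w - starRingEnd ℂ w + 2 * starRingEnd ℂ w * w, -starRingEnd ℂ w, 1 / 2;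
    -w, 1, -(1 / 2);
    1 / 2, -(1 / 2), 3]

noncomputable def ringFactor (w : ℂ) : Matrix (Fin 3) (Fin 3) ℂ :=
  !![-w, 1, -(1 / 2); 1 - w, 0, 1 / 2; 0, 0, 1]

lemma det_ringFactor (w : ℂ) : (ringFactor w).det = w - 1 := by
  simp [ringFactor, det_fin_three]

lemma ringMatrix_eq_conjTranspose_mul_mul (w : ℂ) :
    ringMatrix w = (ringFactor w)ᴴ * diagonal ![1, 1, 5 / 2] * ringFactor w := by
  ext i j
  fin_cases i <;> fin_cases j <;>
    simp [ringMatrix, ringFactor, mul_apply, Fin.sum_univ_three, map_ofNat] <;> ring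

lemma ringMatrix_posDef {w : ℂ} (hw : w ≠ 1) : (ringMatrix w).PosDef := by
  have hD : (diagonal ![1, 1, 5 / 2] : Matrix (Fin 3) (Fin 3) ℂ).PosDef :=
    posDef_diagonal_iff.mpr fun i => by fin_cases i <;> norm_num
  have hA : IsUnit (ringFactor w) := by
    rwa [isUnit_iff_isUnit_det, det_ringFactor, isUnit_iff_ne_zero, sub_ne_zero]
  rw [ringMatrix_eq_conjTranspose_mul_mul]
  exact hD.conjTranspose_mul_mul_same (mulVec_injective_of_isUnit hA)

lemma conj_exp_ofReal_mul_I (q : ℝ) : starRingEnd ℂ (exp (q * I)) = exp (-(q * I)) := by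
  rw [← exp_conj, map_mul, conj_ofReal, conj_I, mul_neg]

lemma ringMatrix_sq_div_two_mul_exp (σw q : ℝ) :
    ringMatrix ((σw : ℂ) ^ 2 / 2 * exp (q * I)) =
      !![1 + (σw : ℂ) ^ 4 / 2 - (σw : ℂ) ^ 2 * Real.cos q,
        -((σw : ℂ) ^ 2 / 2) * exp (-(q : ℂ) * I), 1 / 2;
      -((σw : ℂ) ^ 2 / 2) * exp ((q : ℂ) * I), 1, -(1 / 2);
      1 / 2, -(1 / 2), 3] := by
  have hconj : starRingEnd ℂ ((σw : ℂ) ^ 2 / 2 * exp (q * I)) =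
      (σw : ℂ) ^ 2 / 2 * exp (-(q * I)) := by
    simp only [map_mul, map_div₀, map_pow, conj_ofReal, map_ofNat, conj_exp_ofReal_mul_I]
  have hinv : exp (-(q * I)) * exp (q * I) = 1 := by
    rw [← exp_add, neg_add_cancel, exp_zero]
  rw [ringMatrix, hconj, ofReal_cos, cos]
  ext i j
  fin_cases i <;> fin_cases j <;> simp
  linear_combination (σw : ℂ) ^ 4 / 2 * hinv

lemma sq_div_two_mul_exp_ne_one {σw : ℝ} (hσw2 : σw ^ 2 < 2) (q : ℝ) :
    (σw : ℂ) ^ 2 / 2 * exp (q * I) ≠ 1 := by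
  intro h
  have hnorm := congrArg norm h
  rw [norm_mul, norm_exp_ofReal_mul_I, mul_one, norm_one, norm_div, ← ofReal_pow, norm_real,
    Real.norm_of_nonneg (sq_nonneg σw), RCLike.norm_ofNat] at hnorm
  linarith

end ReluRing

theorem relu_ring_fourier_inverse_covariance_posdef_general
    (σw : ℝ) (hσw2 : σw ^ 2 < 2) (q : ℝ)
    (M : Matrix (Fin 3) (Fin 3) ℂ)
    (hM : M = !![1 + (σw : ℂ) ^ 4 / 2 - (σw : ℂ) ^ 2 * Real.cos q,
        -((σw : ℂ) ^ 2 / 2) * Complex.exp (-(q : ℂ) * Complex.I), 1 / 2;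
      -((σw : ℂ) ^ 2 / 2) * Complex.exp ((q : ℂ) * Complex.I), 1, -(1 / 2);
      1 / 2, -(1 / 2), 3]) :
    M.PosDef := by
  rw [hM, ← ReluRing.ringMatrix_sq_div_two_mul_exp]
  exact ReluRing.ringMatrix_posDef (ReluRing.sq_div_two_mul_exp_ne_one hσw2 q)

/-- For `0 < σ_w² < 2` and any wavevector `q`, the Fourier-space inverse
covariance matrix `M(q)` of the rectified linear stochastic network on a ring is a positive
definite Hermitian matrix. -/
theorem relu_ring_fourier_inverse_covariance_posdef
    (σw : ℝ) (hσw : 0 < σw ^ 2) (hσw2 : σw ^ 2 < 2) (q : ℝ)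
    (M : Matrix (Fin 3) (Fin 3) ℂ)
    (hM : M = !![1 + (σw : ℂ) ^ 4 / 2 - (σw : ℂ) ^ 2 * Real.cos q,
        -((σw : ℂ) ^ 2 / 2) * Complex.exp (-(q : ℂ) * Complex.I), 1 / 2;
      -((σw : ℂ) ^ 2 / 2) * Complex.exp ((q : ℂ) * Complex.I), 1, -(1 / 2);
      1 / 2, -(1 / 2), 3]) :
    M.PosDef :=
  relu_ring_fourier_inverse_covariance_posdef_general σw hσw2 q M hM
end
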